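/- Let d ≥ 2, let ℓ₁,…,ℓ_d be linear forms on ℝⁿ, and let e ∈ ℝⁿ satisfy ℓᵢ(e) = 1 for all i ∈ {1,…,d}. For x ∈ ℝⁿ define the symmetric (d−1)×(d−1) matrix M(x) by M(x)ᵢᵢ = ℓᵢ(x) + ℓ_d(x) for 1 ≤ i ≤ d−1 and M(x)ᵢⱼ = ℓ_d(x) for i ≠ j. Then for every x ∈ ℝⁿ, the matrix M(x) is positive semidefinite if and only if every real root t of the univariate polynomial t ↦ E_{d−1}(ℓ₁(x) + t, …, ℓ_d(x) + t) satisfies t ≤ 0. (That is, the spectrahedral cone {x : M(x) ⪰ 0} equals the first derivative cone of the polyhedral cone {x : ℓᵢ(x) ≥ 0 for all i} with respect to e.) -/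

import Mathlib

/-!
Write `y i = ℓ i x`. The matrix `M(x)` is the Gram matrix of the diagonal form `∑ y i * v i ^ 2`
restricted to the hyperplane `∑ v i = 0` (in the coordinates `v₁, …, v_{d-1}`, with
`v_d = -∑ v i`), and replacing `y` by `y + t` adds `t * ∑ v i ^ 2` to that form.

If all coordinates of `z` except `z a` are positive, then
`E_{d-1}(z) = (∏_{k ≠ a} z k) * (1 + z a * ∑_{k ≠ a} 1 / z k)`, and by Cauchy–Schwarz (with
extremal vector `v k = 1 / z k`) the sign of the second factor decides whether the form of `z`
is semidefinite, resp. definite, on the hyperplane. Hence if the form of `y` is semidefinite, that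
of `y + t` is definite for `t > 0` and `E_{d-1}(y + t) > 0`. Conversely, if `E_{d-1}(y + t)` has no
positive root, it is positive for all `t > 0`, since it is for large `t`; evaluating at
`t = -y b` for a second smallest coordinate `y b` shows that at most one `y i` is negative. So
the form of `y + t` is semidefinite for every `t > 0`, and letting `t → 0` finishes the proof.
-/

/-- The `k`-th elementary symmetric function of `y : Fin d → ℝ`. -/
noncomputable def esymm {d : ℕ} (k : ℕ) (y : Fin d → ℝ) : ℝ :=
  ∑ s ∈ Finset.powersetCard k (Finset.univ : Finset (Fin d)), ∏ i ∈ s, y i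

open Finset

noncomputable def sumProdErase {ι : Type*} [DecidableEq ι] (s : Finset ι) (z : ι → ℝ) :
    ℝ :=
  ∑ j ∈ s, ∏ i ∈ s.erase j, z i

theorem esymm_sub_one_eq_sumProdErase {d : ℕ} (hd : 1 ≤ d) (w : Fin d → ℝ) :
    esymm (d - 1) w = sumProdErase univ w := by
  have himage : powersetCard (d - 1) univ = univ.image fun j : Fin d => univ.erase j := by
    ext s
    simp only [mem_powersetCard, subset_univ, true_and, mem_image, mem_univ]
    constructor
    · intro hs
      obtain ⟨j, hj⟩ := sdiff_nonempty_of_card_lt_card (s := s) (t := univ) (by simp; omega)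
      refine ⟨j, (eq_of_subset_of_card_le ?_ ?_).symm⟩
      · intro i hi
        simp only [mem_erase, mem_univ, and_true]
        rintro rfl
        simp [hi] at hj
      · simp [hs]
    · rintro ⟨j, rfl⟩
      simp
  rw [esymm, sumProdErase, himage, sum_image (erase_injOn _)]

section

variable {ι : Type*} [DecidableEq ι]

theorem sumProdErase_eq_prod_erase_add {s : Finset ι} {a : ι} (ha : a ∈ s) (z : ι → ℝ) :
    sumProdErase s z = ∏ i ∈ s.erase a, z i + z a * sumProdErase (s.erase a) z := by
  rw [sumProdErase, ← add_sum_erase s _ ha, sumProdErase, mul_sum]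
  congr 1
  refine sum_congr rfl fun j hj => ?_
  rw [← mul_prod_erase (s.erase j) z (mem_erase.2 ⟨(ne_of_mem_erase hj).symm, ha⟩),
    erase_right_comm]

theorem sumProdErase_of_eq_zero {s : Finset ι} {a : ι} (ha : a ∈ s) {z : ι → ℝ}
    (hz : z a = 0) :
    sumProdErase s z = ∏ i ∈ s.erase a, z i := by
  simp [sumProdErase_eq_prod_erase_add ha, hz]

theorem sumProdErase_eq_prod_mul_sum_inv {s : Finset ι} {z : ι → ℝ}
    (hz : ∀ i ∈ s, z i ≠ 0) :
    sumProdErase s z = (∏ i ∈ s, z i) * ∑ i ∈ s, (z i)⁻¹ := by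
  rw [sumProdErase, mul_sum]
  refine sum_congr rfl fun j hj => ?_
  rw [← mul_prod_erase s z hj]
  field_simp [hz j hj]

theorem sumProdErase_pos {s : Finset ι} (hs : s.Nonempty) {z : ι → ℝ}
    (hz : ∀ i ∈ s, 0 < z i) :
    0 < sumProdErase s z :=
  sum_pos (fun _ _ => prod_pos fun i hi => hz i (mem_of_mem_erase hi)) hs

variable [Fintype ι]

def DiagPosSemidefOnSumZero (y : ι → ℝ) : Prop :=
  ∀ v : ι → ℝ, ∑ i, v i = 0 → 0 ≤ ∑ i, y i * v i ^ 2

theorem sumProdErase_eq_prod_mul {z : ι → ℝ} {a : ι} (hz : ∀ k ≠ a, 0 < z k) :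
    sumProdErase univ z =
      (∏ k ∈ univ.erase a, z k) * (1 + z a * ∑ k ∈ univ.erase a, (z k)⁻¹) := by
  rw [sumProdErase_eq_prod_erase_add (mem_univ a),
    sumProdErase_eq_prod_mul_sum_inv fun k hk => (hz k (ne_of_mem_erase hk)).ne']
  ring

theorem add_pos_of_forall_sum_eq_zero {z : ι → ℝ}
    (h : ∀ v : ι → ℝ, ∑ i, v i = 0 → v ≠ 0 → 0 < ∑ i, z i * v i ^ 2) {j k : ι}
    (hjk : j ≠ k) : 0 < z j + z k := by
  set v : ι → ℝ := Pi.single j 1 - Pi.single k 1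
  have hsq : ∀ i, v i ^ 2 = (Pi.single j 1 : ι → ℝ) i + (Pi.single k 1 : ι → ℝ) i := by
    intro i
    rcases eq_or_ne i j with rfl | hij <;> rcases eq_or_ne i k with rfl | hik <;>
      simp_all [v]
  have hv := h v (by simp [v, sum_sub_distrib]) fun h0 => by
    simpa [v, hjk.symm] using congr_fun h0 j
  simpa only [hsq, mul_add, sum_add_distrib, Pi.single_apply, mul_ite, mul_one, mul_zero,
    sum_ite_eq', mem_univ, if_true] using hv

theorem sumProdErase_pos_of_forall_sum_eq_zero [Nonempty ι] {z : ι → ℝ}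
    (h : ∀ v : ι → ℝ, ∑ i, v i = 0 → v ≠ 0 → 0 < ∑ i, z i * v i ^ 2) :
    0 < sumProdErase univ z := by
  obtain ⟨a, -, ha⟩ := exists_min_image univ z univ_nonempty
  have hpos : ∀ k ≠ a, 0 < z k := fun k hk => by
    linarith [ha k (mem_univ k), add_pos_of_forall_sum_eq_zero h hk]
  set S := ∑ k ∈ univ.erase a, (z k)⁻¹
  rw [sumProdErase_eq_prod_mul hpos]
  refine mul_pos (prod_pos fun k hk => hpos k (ne_of_mem_erase hk)) ?_
  obtain hS0 | hS0 := (sum_nonneg fun k hk => (inv_pos.2 (hpos k (ne_of_mem_erase hk))).le :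
    0 ≤ S).eq_or_lt'
  · simp [hS0]
  -- the Cauchy–Schwarz extremal vector, on which the form equals `S * (1 + z a * S)`
  set v : ι → ℝ := fun i => if i = a then -S else (z i)⁻¹
  have hva : v a = -S := if_pos rfl
  have hvk : ∀ k ∈ univ.erase a, v k = (z k)⁻¹ := fun k hk => if_neg (ne_of_mem_erase hk)
  have hsum : ∑ i, v i = 0 := by
    rw [← add_sum_erase univ v (mem_univ a), sum_congr rfl hvk, hva, neg_add_cancel]
  have hform : ∑ i, z i * v i ^ 2 = S * (1 + z a * S) := by
    have hterm : ∀ k ∈ univ.erase a, z k * v k ^ 2 = (z k)⁻¹ := fun k hk => by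
      rw [hvk k hk]
      field_simp [(hpos k (ne_of_mem_erase hk)).ne']
    rw [← add_sum_erase univ _ (mem_univ a), hva, sum_congr rfl hterm]
    ring
  have := h v hsum fun h0 => hS0.ne' (neg_eq_zero.1 (hva.symm.trans (congr_fun h0 a)))
  rw [hform] at this
  exact pos_of_mul_pos_right this hS0.le

theorem diagPosSemidefOnSumZero_of_sumProdErase_nonneg {z : ι → ℝ} {a : ι}
    (hz : ∀ k ≠ a, 0 < z k) (hG : 0 ≤ sumProdErase univ z) : DiagPosSemidefOnSumZero z := by
  intro v hv
  obtain hza | hza := le_or_gt 0 (z a)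
  · exact sum_nonneg fun i _ => mul_nonneg
      ((eq_or_ne i a).elim (fun h => h ▸ hza) fun h => (hz i h).le) (sq_nonneg _)
  have hzA : ∀ k ∈ univ.erase a, 0 < z k := fun k hk => hz k (ne_of_mem_erase hk)
  set S := ∑ k ∈ univ.erase a, (z k)⁻¹
  set Q := ∑ k ∈ univ.erase a, z k * v k ^ 2
  have h1S : 0 ≤ 1 + z a * S := by
    rw [sumProdErase_eq_prod_mul hz] at hG
    exact nonneg_of_mul_nonneg_right hG (prod_pos hzA)
  have hva : v a = -∑ k ∈ univ.erase a, v k := by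
    rw [← add_sum_erase univ v (mem_univ a)] at hv
    linarith
  have hCS : v a ^ 2 ≤ S * Q := by
    rw [hva, neg_sq]
    refine sum_sq_le_sum_mul_sum_of_sq_le_mul _ (fun k hk => (inv_pos.2 (hzA k hk)).le)
      (fun k hk => mul_nonneg (hzA k hk).le (sq_nonneg _)) fun k hk => ?_
    rw [inv_mul_cancel_left₀ (hzA k hk).ne']
  have hQ : 0 ≤ Q := sum_nonneg fun k hk => mul_nonneg (hzA k hk).le (sq_nonneg _)
  rw [← add_sum_erase univ _ (mem_univ a)]
  nlinarith [mul_nonneg hQ h1S, mul_le_mul_of_nonpos_left hCS hza.le]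

theorem exists_forall_ne_nonneg_of_sumProdErase_add_pos [Nonempty ι] {y : ι → ℝ}
    (h : ∀ t > 0, 0 < sumProdErase univ fun i => y i + t) : ∃ a, ∀ k ≠ a, 0 ≤ y k := by
  obtain ⟨a, -, ha⟩ := exists_min_image univ y univ_nonempty
  refine ⟨a, fun k hk => ?_⟩
  by_contra! hyk
  have hka : k ∈ univ.erase a := mem_erase.2 ⟨hk, mem_univ k⟩
  -- `b` is a second smallest coordinate: at `t = -y b` only the term omitting `b` survives,
  -- and it is `≤ 0`
  obtain ⟨b, hb, hb_min⟩ := exists_min_image (univ.erase a) y ⟨k, hka⟩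
  have hyb : y b < 0 := (hb_min k hka).trans_lt hyk
  have hab : a ∈ univ.erase b := mem_erase.2 ⟨(ne_of_mem_erase hb).symm, mem_univ a⟩
  have hG := h (-y b) (neg_pos.2 hyb)
  rw [sumProdErase_of_eq_zero (mem_univ b) (add_neg_cancel (y b)),
    ← mul_prod_erase _ _ hab] at hG
  refine hG.not_ge (mul_nonpos_of_nonpos_of_nonneg ?_ (prod_nonneg fun i hi => ?_))
  · linarith [ha b (mem_univ b)]
  · have hia : i ∈ univ.erase a := mem_erase.2 ⟨ne_of_mem_erase hi, mem_univ i⟩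
    linarith [hb_min i hia]

theorem continuous_sumProdErase_add (y : ι → ℝ) :
    Continuous fun t : ℝ => sumProdErase univ fun i => y i + t := by
  unfold sumProdErase
  fun_prop

theorem sumProdErase_add_pos [Nonempty ι] {y : ι → ℝ}
    (h : ∀ t, (sumProdErase univ fun i => y i + t) = 0 → t ≤ 0) {t : ℝ} (ht : 0 < t) :
    0 < sumProdErase univ fun i => y i + t := by
  set T := t + ∑ i, |y i|
  have hT : 0 < sumProdErase univ fun i => y i + T :=
    sumProdErase_pos univ_nonempty fun i _ => by
      linarith [neg_abs_le (y i), single_le_sum (fun j _ => abs_nonneg (y j)) (mem_univ i)]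
  have htT : t ≤ T := le_add_of_nonneg_right (sum_nonneg fun i _ => abs_nonneg (y i))
  by_contra! hle
  obtain ⟨c, hc, hc0⟩ :=
    intermediate_value_Icc htT (continuous_sumProdErase_add y).continuousOn ⟨hle, hT.le⟩
  linarith [h c hc0, hc.1]

open Filter Topology in
theorem diagPosSemidefOnSumZero_iff_forall_root_nonpos [Nonempty ι] (y : ι → ℝ) :
    DiagPosSemidefOnSumZero y ↔ ∀ t, (sumProdErase univ fun i => y i + t) = 0 → t ≤ 0 := by
  have hshift : ∀ (t : ℝ) (v : ι → ℝ),
      ∑ i, (y i + t) * v i ^ 2 = ∑ i, y i * v i ^ 2 + t * ∑ i, v i ^ 2 := fun t v => by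
    rw [mul_sum, ← sum_add_distrib]
    exact sum_congr rfl fun i _ => by ring
  constructor
  · intro h t hroot
    by_contra! ht
    refine (sumProdErase_pos_of_forall_sum_eq_zero fun v hv hv0 => ?_).ne' hroot
    obtain ⟨i, hi⟩ := Function.ne_iff.1 hv0
    have hnorm : 0 < ∑ i, v i ^ 2 :=
      sum_pos' (fun i _ => sq_nonneg _) ⟨i, mem_univ i, sq_pos_of_ne_zero hi⟩
    rw [hshift]
    exact add_pos_of_nonneg_of_pos (h v hv) (mul_pos ht hnorm)
  · intro h v hv
    have hpos : ∀ t > 0, 0 < sumProdErase univ fun i => y i + t :=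
      fun t ht => sumProdErase_add_pos h ht
    obtain ⟨a, ha⟩ := exists_forall_ne_nonneg_of_sumProdErase_add_pos hpos
    have hshifted : ∀ t > 0, 0 ≤ ∑ i, y i * v i ^ 2 + t * ∑ i, v i ^ 2 := fun t ht => by
      rw [← hshift]
      exact diagPosSemidefOnSumZero_of_sumProdErase_nonneg
        (fun k hk => add_pos_of_nonneg_of_pos (ha k hk) ht) (hpos t ht).le v hv
    have hlim : Tendsto (fun t => ∑ i, y i * v i ^ 2 + t * ∑ i, v i ^ 2) (𝓝[>] 0)
        (𝓝 (∑ i, y i * v i ^ 2)) := by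
      have hcont : Continuous fun t : ℝ => ∑ i, y i * v i ^ 2 + t * ∑ i, v i ^ 2 := by
        fun_prop
      simpa using (hcont.tendsto 0).mono_left nhdsWithin_le_nhds
    exact ge_of_tendsto hlim (eventually_nhdsWithin_of_forall hshifted)

end

theorem posSemidef_diag_add_const_iff {m : Type*} [Fintype m] [DecidableEq m] (a : m → ℝ)
    (c : ℝ) :
    (Matrix.of fun i j : m => if i = j then a i + c else c).PosSemidef ↔
      ∀ w : m → ℝ, 0 ≤ ∑ i, a i * w i ^ 2 + c * (∑ i, w i) ^ 2 := by
  set M : Matrix m m ℝ := Matrix.of fun i j => if i = j then a i + c else c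
  have hherm : M.IsHermitian := by
    ext i j
    simp only [M, Matrix.conjTranspose_apply, Matrix.of_apply, star_trivial]
    split_ifs <;> simp_all
  have hrow : ∀ w i, M.mulVec w i = a i * w i + c * ∑ j, w j := fun w i => by
    simp only [M, Matrix.mulVec, dotProduct, Matrix.of_apply, ite_mul, add_mul, mul_sum]
    rw [← Fintype.sum_ite_eq i fun j => a i * w j, ← sum_add_distrib]
    exact sum_congr rfl fun j _ => by split_ifs <;> ring
  have hquad : ∀ w, w ⬝ᵥ M.mulVec w = ∑ i, a i * w i ^ 2 + c * (∑ i, w i) ^ 2 := by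
    intro w
    simp only [dotProduct, hrow, mul_add, sum_add_distrib, ← sum_mul]
    rw [sq (∑ j, w j)]
    congr 1
    · exact sum_congr rfl fun i _ => by ring
    · ring
  rw [Matrix.posSemidef_iff_dotProduct_mulVec]
  simp only [hherm, true_and, star_trivial, hquad]

theorem diagPosSemidefOnSumZero_iff_snoc {m : ℕ} (y : Fin (m + 1) → ℝ) :
    DiagPosSemidefOnSumZero y ↔
      ∀ w : Fin m → ℝ,
        0 ≤ ∑ i, y i.castSucc * w i ^ 2 + y (Fin.last m) * (∑ i, w i) ^ 2 := by
  have hsnoc : ∀ w : Fin m → ℝ,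
      ∑ i, y i * (Fin.snoc w (-∑ i, w i) : Fin (m + 1) → ℝ) i ^ 2 =
      ∑ i, y i.castSucc * w i ^ 2 + y (Fin.last m) * (∑ i, w i) ^ 2 := fun w => by
    simp [Fin.sum_univ_castSucc]
  refine ⟨fun h w => hsnoc w ▸ h _ (by simp [Fin.sum_univ_castSucc]), fun h v hv => ?_⟩
  have hlast : v (Fin.last m) = -∑ i, Fin.init v i := by
    rw [Fin.sum_univ_castSucc] at hv
    simp only [Fin.init]
    linarith
  have := hsnoc (Fin.init v)
  rw [← hlast, Fin.snoc_init_self] at this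
  exact this ▸ h _

theorem stmt0 {n d : ℕ} (hd : 2 ≤ d) (ℓ : Fin d → ((Fin n → ℝ) →ₗ[ℝ] ℝ))
    (x : Fin n → ℝ) :
    (Matrix.of fun i j : Fin (d - 1) =>
        if i = j then
          ℓ (Fin.castLE (by omega) i) x + ℓ ⟨d - 1, by omega⟩ x
        else ℓ ⟨d - 1, by omega⟩ x).PosSemidef ↔
      ∀ t : ℝ, esymm (d - 1) (fun i => ℓ i x + t) = 0 → t ≤ 0 := by
  obtain ⟨m, rfl⟩ : ∃ m, d = m + 2 := ⟨d - 2, by omega⟩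
  simp only [esymm_sub_one_eq_sumProdErase (by omega : 1 ≤ m + 2)]
  exact (posSemidef_diag_add_const_iff _ _).trans
    ((diagPosSemidefOnSumZero_iff_snoc fun i => ℓ i x).symm.trans
      (diagPosSemidefOnSumZero_iff_forall_root_nonpos _))
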